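/- Energy dissipation identity for smooth solutions of the Darcy MHD system: if (h,B,D,P) is a C¹ solution on [0,T]×𝕋³ with h > 0 of the system ∂_t h + ∇·P = 0, ∂_t B + ∇×(B×(P/h) + D/h) = 0, D = ∇×(B/h), P = ∇·(B⊗B/h) + ∇(1/h), ∇·B = 0, then d/dt ∫_{𝕋³} (B²+1)/(2h) + ∫_{𝕋³} (D²+P²)/h = 0. -/

import Mathlib

open MeasureTheory
noncomputable section

/-- Euclidean `ℝ³`; functions on the torus `𝕋³ = ℝ³/ℤ³` are modelled as
`ℤ³`-periodic functions on `ℝ³`. -/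
abbrev E3 := EuclideanSpace ℝ (Fin 3)

/-- The `i`-th standard basis vector of `ℝ³`. -/
def unitv (i : Fin 3) : E3 := EuclideanSpace.single i 1

/-- `ℤ³`-periodicity (the function descends to the torus `𝕋³ = ℝ³/ℤ³`). -/
def Per (f : E3 → ℝ) : Prop :=
  ∀ (x : E3) (k : Fin 3 → ℤ), f (x + ((WithLp.equiv 2 (Fin 3 → ℝ)).symm fun i => (k i : ℝ))) = f x

/-- A fundamental domain `[0,1)³` of the torus; `∫_{𝕋³} = ∫_{Box}`. -/
def Box : Set E3 := {x | ∀ i, x i ∈ Set.Ico (0:ℝ) 1}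

/-- Time derivative `∂ₜF` of a function on `ℝ × ℝ³` (time × space). -/
def pdt (F : ℝ × E3 → ℝ) (p : ℝ × E3) : ℝ := fderiv ℝ F p (1, 0)

/-- Spatial partial derivative `∂ᵢF` of a function on `ℝ × ℝ³`. -/
def pdx (i : Fin 3) (F : ℝ × E3 → ℝ) (p : ℝ × E3) : ℝ := fderiv ℝ F p (0, unitv i)

/-- Spatial partial derivative `∂ᵢf` of a function on `ℝ³`. -/
def spd (i : Fin 3) (f : E3 → ℝ) (x : E3) : ℝ := fderiv ℝ f x (unitv i)

/-- `i`-th component of the curl `∇×X` of a (time-dependent) vector field,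
`(∇×X)ᵢ = ∂_{i+1}X_{i+2} - ∂_{i+2}X_{i+1}` (cyclic indices in `Fin 3`). -/
def curlx (X : Fin 3 → ℝ × E3 → ℝ) (i : Fin 3) (p : ℝ × E3) : ℝ :=
  pdx (i+1) (X (i+2)) p - pdx (i+2) (X (i+1)) p

/-! With `G = (|B|²+1)/(2h)` and `F = (B×P + D)/h` the evolution equations give
`∂ₜG = (B/h)·∂ₜB - (G/h) ∂ₜh = -(B/h)·(∇×F) + (G/h) ∇·P`. The constitutive relations and
`∇·B = 0` give `∇(G/h) = (P + B×D)/h`, and `D = ∇×(B/h)`; the product rules for `∇·(X×Y)` and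
`∇·(fY)` then turn this into `∂ₜG = -(D²+P²)/h + ∇·W` with `W = (B/h)×F + (G/h)P`, the triple
products `(B×P)·D` and `(B×D)·P` cancelling. Over a period cell `∇·W` integrates to zero by the
divergence theorem and periodicity, and since `G` is `C¹` the time derivative passes under the
integral. -/

section DirectionalDerivative
variable {E : Type*} [NormedAddCommGroup E] [NormedSpace ℝ E] {f g : E → ℝ} {p v : E}

lemma fderiv_fun_add_apply (hf : DifferentiableAt ℝ f p) (hg : DifferentiableAt ℝ g p) :
    fderiv ℝ (fun x => f x + g x) p v = fderiv ℝ f p v + fderiv ℝ g p v := by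
  simp [fderiv_fun_add hf hg]

lemma fderiv_fun_sub_apply (hf : DifferentiableAt ℝ f p) (hg : DifferentiableAt ℝ g p) :
    fderiv ℝ (fun x => f x - g x) p v = fderiv ℝ f p v - fderiv ℝ g p v := by
  simp [fderiv_fun_sub hf hg]

lemma fderiv_fun_mul_apply (hf : DifferentiableAt ℝ f p) (hg : DifferentiableAt ℝ g p) :
    fderiv ℝ (fun x => f x * g x) p v = fderiv ℝ f p v * g p + f p * fderiv ℝ g p v := by
  simp [fderiv_fun_mul hf hg]; ring

lemma fderiv_fun_inv_apply (hf : DifferentiableAt ℝ f p) (hp : f p ≠ 0) :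
    fderiv ℝ (fun x => (f x)⁻¹) p v = -fderiv ℝ f p v / f p ^ 2 := by
  rw [fderiv_fun_comp p (differentiableAt_inv hp) hf]
  simp [fderiv_inv, div_eq_mul_inv, mul_comm]

lemma fderiv_fun_div_apply (hf : DifferentiableAt ℝ f p) (hg : DifferentiableAt ℝ g p)
    (hp : g p ≠ 0) :
    fderiv ℝ (fun x => f x / g x) p v
      = (fderiv ℝ f p v * g p - f p * fderiv ℝ g p v) / g p ^ 2 := by
  simp only [div_eq_mul_inv (f _)]
  rw [fderiv_fun_mul_apply (g := fun x => (g x)⁻¹) hf (hg.inv hp), fderiv_fun_inv_apply hg hp]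
  field_simp
  ring

lemma fderiv_fun_sq_apply (hf : DifferentiableAt ℝ f p) :
    fderiv ℝ (fun x => f x ^ 2) p v = 2 * f p * fderiv ℝ f p v := by
  simp_rw [sq, fderiv_fun_mul_apply hf hf]; ring

lemma fderiv_fun_sum_apply {ι : Type*} {s : Finset ι} {f : ι → E → ℝ}
    (hf : ∀ i ∈ s, DifferentiableAt ℝ (f i) p) :
    fderiv ℝ (fun x => ∑ i ∈ s, f i x) p v = ∑ i ∈ s, fderiv ℝ (f i) p v := by
  simp [fderiv_fun_sum hf]

end DirectionalDerivative

def crossx {α : Type*} (X Y : Fin 3 → α → ℝ) (i : Fin 3) (q : α) : ℝ :=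
  X (i+1) q * Y (i+2) q - X (i+2) q * Y (i+1) q

lemma sum_crossx_mul_eq_neg {α : Type*} (X Y Z : Fin 3 → α → ℝ) (q : α) :
    ∑ i, crossx X Y i q * Z i q = -∑ i, crossx X Z i q * Y i q := by
  simp only [crossx, Fin.sum_univ_three, Fin.isValue, Fin.reduceAdd, zero_add]
  ring

lemma sum_pdx_crossx {A F : Fin 3 → ℝ × E3 → ℝ} {p : ℝ × E3}
    (hA : ∀ i, DifferentiableAt ℝ (A i) p) (hF : ∀ i, DifferentiableAt ℝ (F i) p) :
    ∑ i, pdx i (crossx A F i) p = ∑ i, F i p * curlx A i p - ∑ i, A i p * curlx F i p := by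
  unfold crossx
  simp (disch := fun_prop) only [pdx, curlx, fderiv_fun_sub_apply, fderiv_fun_mul_apply]
  simp only [Finset.sum_sub_distrib, Fin.sum_univ_three, Fin.isValue, Fin.reduceAdd, zero_add]
  ring

section Energy
variable (h : ℝ × E3 → ℝ) (B D P : Fin 3 → ℝ × E3 → ℝ)

def energyDensity (q : ℝ × E3) : ℝ := ((∑ i, (B i q)^2) + 1) / (2 * h q)

def electricField (j : Fin 3) (q : ℝ × E3) : ℝ := (crossx B P j q + D j q) / h q

def energyFlux (i : Fin 3) (q : ℝ × E3) : ℝ :=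
  crossx (fun j q => B j q / h q) (electricField h B D P) i q
    + energyDensity h B q / h q * P i q

end Energy

section Regularity
variable {h : ℝ × E3 → ℝ} {B D P : Fin 3 → ℝ × E3 → ℝ}

lemma contDiff_energyDensity {n : WithTop ℕ∞} (hh : ContDiff ℝ n h)
    (hB : ∀ i, ContDiff ℝ n (B i)) (hp : ∀ q, h q ≠ 0) : ContDiff ℝ n (energyDensity h B) := by
  have hp2 : ∀ q, 2 * h q ≠ 0 := fun q => mul_ne_zero two_ne_zero (hp q)
  unfold energyDensity; fun_prop (disch := assumption)

lemma contDiff_energyFlux {n : WithTop ℕ∞} (hh : ContDiff ℝ n h) (hB : ∀ i, ContDiff ℝ n (B i))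
    (hD : ∀ i, ContDiff ℝ n (D i)) (hP : ∀ i, ContDiff ℝ n (P i)) (hp : ∀ q, h q ≠ 0)
    (i : Fin 3) : ContDiff ℝ n (energyFlux h B D P i) := by
  have hG := contDiff_energyDensity hh hB hp
  unfold energyFlux electricField crossx; fun_prop (disch := assumption)

lemma per_energyFlux {t : ℝ} (hh : Per fun x => h (t, x)) (hB : ∀ i, Per fun x => B i (t, x))
    (hD : ∀ i, Per fun x => D i (t, x)) (hP : ∀ i, Per fun x => P i (t, x)) (i : Fin 3) :
    Per fun x => energyFlux h B D P i (t, x) := fun x k => by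
  simp only [energyFlux, electricField, crossx, energyDensity, hh x k, hB _ x k, hD _ x k,
    hP _ x k]

end Regularity

section Pointwise
variable {h : ℝ × E3 → ℝ} {B D P : Fin 3 → ℝ × E3 → ℝ} {p : ℝ × E3}

lemma fderiv_energyDensity_apply (hh : DifferentiableAt ℝ h p)
    (hB : ∀ i, DifferentiableAt ℝ (B i) p) (hp : h p ≠ 0) (v : ℝ × E3) :
    fderiv ℝ (energyDensity h B) p v
      = ∑ i, B i p / h p * fderiv ℝ (B i) p v - energyDensity h B p / h p * fderiv ℝ h p v := by
  have hB2 : ∀ i ∈ Finset.univ, DifferentiableAt ℝ (fun q => B i q ^ 2) p :=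
    fun i _ => (hB i).pow 2
  unfold energyDensity
  rw [fderiv_fun_div_apply ((DifferentiableAt.fun_sum hB2).add_const 1) (hh.const_mul 2)
      (mul_ne_zero two_ne_zero hp),
    fderiv_fun_add_apply (DifferentiableAt.fun_sum hB2) (differentiableAt_const 1),
    fderiv_fun_sum_apply hB2]
  simp only [fderiv_fun_sq_apply (hB _), fderiv_const_mul hh, fderiv_const_apply,
    Fin.sum_univ_three, zero_apply, smul_apply, smul_eq_mul, add_zero]
  field_simp

lemma pdx_energyDensity_div_eq (hh : DifferentiableAt ℝ h p)
    (hB : ∀ i, DifferentiableAt ℝ (B i) p) (hp : h p ≠ 0)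
    (heq_P : ∀ i, P i p = (∑ j, pdx j (fun q => B i q * B j q / h q) p)
      + pdx i (fun q => (h q)⁻¹) p)
    (heq_D : ∀ i, D i p = curlx (fun j q => B j q / h q) i p)
    (hdivB : ∑ i, pdx i (B i) p = 0) (j : Fin 3) :
    pdx j (fun q => energyDensity h B q / h q) p = (P j p + crossx B D j p) / h p := by
  have hG : DifferentiableAt ℝ (energyDensity h B) p := by
    unfold energyDensity; fun_prop (disch := positivity)
  have hdiv : pdx 2 (B 2) p = -pdx 0 (B 0) p - pdx 1 (B 1) p := by
    rw [Fin.sum_univ_three] at hdivB; linarith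
  rw [pdx, fderiv_fun_div_apply hG hh hp, fderiv_energyDensity_apply hh hB hp, heq_P j, crossx,
    heq_D, heq_D]
  simp (disch := first | assumption | fun_prop) only [curlx, pdx, fderiv_fun_div_apply,
    fderiv_fun_mul_apply, fderiv_fun_inv_apply]
  simp only [pdx] at hdiv
  fin_cases j <;>
    simp only [Fin.zero_eta, Fin.mk_one, Fin.reduceFinMk, Fin.isValue, Fin.reduceAdd, zero_add,
      Fin.sum_univ_three, energyDensity, hdiv] <;>
    field_simp <;> ring

lemma sum_pdx_energyFlux (hh : DifferentiableAt ℝ h p) (hB : ∀ i, DifferentiableAt ℝ (B i) p)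
    (hD : ∀ i, DifferentiableAt ℝ (D i) p) (hP : ∀ i, DifferentiableAt ℝ (P i) p)
    (hp : h p ≠ 0) :
    ∑ i, pdx i (energyFlux h B D P i) p
      = ∑ i, electricField h B D P i p * curlx (fun j q => B j q / h q) i p
        - ∑ i, B i p / h p * curlx (electricField h B D P) i p
        + ∑ i, (pdx i (fun q => energyDensity h B q / h q) p * P i p
          + energyDensity h B p / h p * pdx i (P i) p) := by
  have hA : ∀ i, DifferentiableAt ℝ (fun q => B i q / h q) p := fun i => by
    fun_prop (disch := assumption)
  have hF : ∀ i, DifferentiableAt ℝ (electricField h B D P i) p := by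
    unfold electricField crossx; fun_prop (disch := assumption)
  have hG : DifferentiableAt ℝ (fun q => energyDensity h B q / h q) p := by
    unfold energyDensity; fun_prop (disch := positivity)
  rw [← sum_pdx_crossx hA hF, ← Finset.sum_add_distrib]
  refine Finset.sum_congr rfl fun i _ => ?_
  have hAF : DifferentiableAt ℝ (crossx (fun j q => B j q / h q) (electricField h B D P) i) p := by
    unfold crossx; fun_prop
  unfold energyFlux
  rw [pdx, fderiv_fun_add_apply hAF (hG.fun_mul (hP i)), fderiv_fun_mul_apply hG (hP i)]
  rfl

lemma pdt_energyDensity_eq (hh : DifferentiableAt ℝ h p) (hB : ∀ i, DifferentiableAt ℝ (B i) p)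
    (hD : ∀ i, DifferentiableAt ℝ (D i) p) (hP : ∀ i, DifferentiableAt ℝ (P i) p) (hp : h p ≠ 0)
    (heq_h : pdt h p + ∑ i, pdx i (P i) p = 0)
    (heq_B : ∀ i, pdt (B i) p + curlx (electricField h B D P) i p = 0)
    (heq_D : ∀ i, D i p = curlx (fun j q => B j q / h q) i p)
    (heq_P : ∀ i, P i p = (∑ j, pdx j (fun q => B i q * B j q / h q) p)
      + pdx i (fun q => (h q)⁻¹) p)
    (hdivB : ∑ i, pdx i (B i) p = 0) :
    pdt (energyDensity h B) p
      = -((∑ i, (D i p ^ 2 + P i p ^ 2)) / h p) + ∑ i, pdx i (energyFlux h B D P i) p := by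
  have hdt : pdt (energyDensity h B) p
      = ∑ i, B i p / h p * pdt (B i) p - energyDensity h B p / h p * pdt h p :=
    fderiv_energyDensity_apply hh hB hp _
  rw [sum_pdx_energyFlux hh hB hD hP hp, hdt, eq_neg_of_add_eq_zero_left heq_h]
  simp only [eq_neg_of_add_eq_zero_left (heq_B _), ← heq_D,
    pdx_energyDensity_div_eq hh hB hp heq_P heq_D hdivB]
  have htriple := sum_crossx_mul_eq_neg B P D p
  simp only [electricField, Fin.sum_univ_three] at htriple ⊢
  field_simp
  linear_combination -htriple

end Pointwise

section ParametricIntegral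
variable {E : Type*} [NormedAddCommGroup E] [NormedSpace ℝ E] [FiniteDimensional ℝ E]
  [MeasurableSpace E] [BorelSpace E] {μ : Measure E} [IsFiniteMeasureOnCompacts μ] {S : Set E}

lemma Continuous.integrableOn_of_isBounded {f : E → ℝ} (hf : Continuous f)
    (hS : Bornology.IsBounded S) : IntegrableOn f S μ :=
  (hf.continuousOn.integrableOn_compact hS.isCompact_closure).mono_set subset_closure

lemma hasDerivAt_setIntegral_of_contDiff (hS : Bornology.IsBounded S) (hSm : MeasurableSet S)
    {F : ℝ × E → ℝ} (hF : ContDiff ℝ 1 F) (t : ℝ) :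
    HasDerivAt (fun s => ∫ x in S, F (s, x) ∂μ) (∫ x in S, fderiv ℝ F (t, x) (1, 0) ∂μ) t := by
  have hF' : Continuous (fderiv ℝ F) := hF.continuous_fderiv one_ne_zero
  obtain ⟨M, hM⟩ := (isCompact_Icc (a := t - 1) (b := t + 1)).prod hS.isCompact_closure
    |>.exists_bound_of_continuousOn hF'.continuousOn
  have hbound : ∀ᵐ x ∂μ.restrict S, ∀ s ∈ Metric.ball t 1,
      ‖fderiv ℝ F (s, x) (1, 0)‖ ≤ M * ‖((1 : ℝ), (0 : E))‖ := by
    filter_upwards [ae_restrict_mem hSm] with x hx s hs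
    have hs' : s ∈ Set.Icc (t - 1) (t + 1) := by
      rw [Metric.mem_ball, Real.dist_eq, abs_lt] at hs; constructor <;> linarith
    exact ((fderiv ℝ F (s, x)).le_opNorm _).trans
      (mul_le_mul_of_nonneg_right (hM _ ⟨hs', subset_closure hx⟩) (norm_nonneg _))
  refine (hasDerivAt_integral_of_dominated_loc_of_deriv_le (Metric.ball_mem_nhds t one_pos)
    (.of_forall fun s => (hF.continuous.comp (.prodMk_right s)).aestronglyMeasurable)
    ((hF.continuous.comp (.prodMk_right t)).integrableOn_of_isBounded hS)
    ((hF'.comp (.prodMk_right t)).clm_apply continuous_const).aestronglyMeasurable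
    hbound (integrableOn_const (hS.measure_lt_top).ne)
    (.of_forall fun x s _ => ?_)).2
  exact ((hF.differentiable one_ne_zero (s, x)).hasFDerivAt.comp_hasDerivAt s
    ((hasDerivAt_id s).prodMk (hasDerivAt_const s x)))

end ParametricIntegral

lemma box_eq_preimage_ofLp : Box = WithLp.ofLp ⁻¹' Set.univ.pi fun _ => Set.Ico (0 : ℝ) 1 := by
  ext x; simp [Box]

lemma measurableSet_box : MeasurableSet Box := by
  rw [box_eq_preimage_ofLp]
  exact (PiLp.volume_preserving_ofLp (Fin 3)).measurable (.univ_pi fun _ => measurableSet_Ico)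

lemma isBounded_box : Bornology.IsBounded Box :=
  (isCompact_Icc.image (PiLp.continuous_toLp 2 fun _ : Fin 3 => ℝ)).isBounded.subset
    fun x hx => ⟨WithLp.ofLp x, ⟨fun i => (hx i).1, fun i => (hx i).2.le⟩, rfl⟩

lemma setIntegral_box_eq_integral_Icc (f : E3 → ℝ) :
    ∫ x in Box, f x = ∫ y in Set.Icc (0 : Fin 3 → ℝ) 1, f (WithLp.toLp 2 y) := by
  rw [box_eq_preimage_ofLp]
  exact ((PiLp.volume_preserving_ofLp (Fin 3)).setIntegral_preimage_emb
    (MeasurableEquiv.toLp 2 (Fin 3 → ℝ)).symm.measurableEmbedding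
    (fun y => f (WithLp.toLp 2 y)) _).trans
    (setIntegral_congr_set Measure.univ_pi_Ico_ae_eq_Icc)

lemma Per.apply_toLp_insertNth_one {f : E3 → ℝ} (hf : Per f) (i : Fin 3) (y : Fin 2 → ℝ) :
    f (WithLp.toLp 2 (i.insertNth 1 y)) = f (WithLp.toLp 2 (i.insertNth 0 y)) := by
  have hshift :
      i.insertNth (1 : ℝ) y = i.insertNth 0 y + fun j => ((Pi.single i 1 : Fin 3 → ℤ) j : ℝ) := by
    funext j
    rcases eq_or_ne j i with rfl | hji
    · simp
    · obtain ⟨l, rfl⟩ := Fin.exists_succAbove_eq hji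
      simp [hji]
  rw [hshift, WithLp.toLp_add]
  exact hf _ (Pi.single i 1)

lemma integral_box_sum_spd_eq_zero {W : Fin 3 → E3 → ℝ} (hW : ∀ i, ContDiff ℝ 1 (W i))
    (hper : ∀ i, Per (W i)) : ∫ x in Box, ∑ i, spd i (W i) x = 0 := by
  have hW' : ∀ i, Continuous (fderiv ℝ (W i)) := fun i => (hW i).continuous_fderiv one_ne_zero
  let L : (Fin 3 → ℝ) →L[ℝ] E3 := (PiLp.continuousLinearEquiv 2 ℝ fun _ : Fin 3 => ℝ).symm
  have hdiv := integral_divergence_of_hasFDerivAt_off_countable' 0 1 zero_le_one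
    (fun i y => W i (L y)) (fun i y => (fderiv ℝ (W i) (L y)).comp L) ∅ Set.countable_empty
    (fun i => ((hW i).continuous.comp L.continuous).continuousOn)
    (fun y _ i => ((hW i).differentiable one_ne_zero (L y)).hasFDerivAt.comp y L.hasFDerivAt)
    (ContinuousOn.integrableOn_compact isCompact_Icc (Continuous.continuousOn (by fun_prop)))
  rw [setIntegral_box_eq_integral_Icc]
  refine hdiv.trans (Finset.sum_eq_zero fun i _ => sub_eq_zero.2 ?_)
  exact setIntegral_congr_fun measurableSet_Icc fun y _ => (hper i).apply_toLp_insertNth_one i y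

lemma integral_box_add_sum_spd {f : E3 → ℝ} (hf : Continuous f) {W : Fin 3 → E3 → ℝ}
    (hW : ∀ i, ContDiff ℝ 1 (W i)) (hper : ∀ i, Per (W i)) :
    ∫ x in Box, (f x + ∑ i, spd i (W i) x) = ∫ x in Box, f x := by
  have hspd : Continuous fun x => ∑ i, spd i (W i) x := continuous_finsetSum _ fun i _ =>
    ((hW i).continuous_fderiv one_ne_zero).clm_apply continuous_const
  rw [integral_add (hf.integrableOn_of_isBounded isBounded_box)
    (hspd.integrableOn_of_isBounded isBounded_box), integral_box_sum_spd_eq_zero hW hper, add_zero]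

lemma spd_eq_pdx {F : ℝ × E3 → ℝ} {t : ℝ} {x : E3} (hF : DifferentiableAt ℝ F (t, x))
    (i : Fin 3) : spd i (fun y => F (t, y)) x = pdx i F (t, x) := by
  have hslice : HasFDerivAt (fun y : E3 => (t, y)) ((0 : E3 →L[ℝ] ℝ).prod (.id ℝ E3)) x :=
    (hasFDerivAt_const t x).prodMk (hasFDerivAt_id x)
  rw [spd, show (fun y => F (t, y)) = F ∘ Prod.mk t from rfl,
    (hF.hasFDerivAt.comp x hslice).fderiv]
  simp [pdx]

theorem darcy_mhd_energy_dissipation_general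
    (h : ℝ × E3 → ℝ) (B D P : Fin 3 → ℝ × E3 → ℝ)
    (hreg : ContDiff ℝ 1 h) (hBreg : ∀ i, ContDiff ℝ 1 (B i))
    (hDreg : ∀ i, ContDiff ℝ 1 (D i)) (hPreg : ∀ i, ContDiff ℝ 1 (P i))
    (hpos : ∀ p, 0 < h p)
    (hper : ∀ t, Per fun x => h (t, x)) (hBper : ∀ i t, Per fun x => B i (t, x))
    (hDper : ∀ i t, Per fun x => D i (t, x)) (hPper : ∀ i t, Per fun x => P i (t, x))
    (heq_h : ∀ p, pdt h p + ∑ i, pdx i (P i) p = 0)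
    (heq_B : ∀ i p, pdt (B i) p
      + curlx (fun j q => (B (j+1) q * P (j+2) q - B (j+2) q * P (j+1) q + D j q) / h q) i p = 0)
    (heq_D : ∀ i p, D i p = curlx (fun j q => B j q / h q) i p)
    (heq_P : ∀ i p, P i p = (∑ j, pdx j (fun q => B i q * B j q / h q) p)
      + pdx i (fun q => (h q)⁻¹) p)
    (hdivB : ∀ p, ∑ i, pdx i (B i) p = 0)
    (t : ℝ) :
    HasDerivAt (fun s => ∫ x in Box, ((∑ i, (B i (s, x))^2) + 1) / (2 * h (s, x)))
      (-∫ x in Box, (∑ i, ((D i (t, x))^2 + (P i (t, x))^2)) / h (t, x)) t := by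
  have hne : ∀ p, h p ≠ 0 := fun p => (hpos p).ne'
  have hW := contDiff_energyFlux hreg hBreg hDreg hPreg hne
  have hdiss : Continuous fun x => (∑ i, ((D i (t, x))^2 + (P i (t, x))^2)) / h (t, x) := by
    fun_prop (disch := exact fun x => hne (t, x))
  have hpt : ∀ x, pdt (energyDensity h B) (t, x)
      = -((∑ i, ((D i (t, x))^2 + (P i (t, x))^2)) / h (t, x))
        + ∑ i, spd i (fun y => energyFlux h B D P i (t, y)) x := fun x => by
    rw [pdt_energyDensity_eq (hreg.differentiable one_ne_zero _)
      (fun i => (hBreg i).differentiable one_ne_zero _)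
      (fun i => (hDreg i).differentiable one_ne_zero _)
      (fun i => (hPreg i).differentiable one_ne_zero _) (hne _) (heq_h _) (fun i => heq_B i _)
      (fun i => heq_D i _) (fun i => heq_P i _) (hdivB _)]
    simp only [spd_eq_pdx ((hW _).differentiable one_ne_zero _)]
  have hint : ∫ x in Box, pdt (energyDensity h B) (t, x)
      = -∫ x in Box, (∑ i, ((D i (t, x))^2 + (P i (t, x))^2)) / h (t, x) := by
    rw [setIntegral_congr_fun measurableSet_box fun x _ => hpt x, ← integral_neg]
    exact integral_box_add_sum_spd hdiss.neg (fun i => (hW i).comp (contDiff_prodMk_right t))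
      (per_energyFlux (hper t) (hBper · t) (hDper · t) (hPper · t))
  rw [← hint]
  exact hasDerivAt_setIntegral_of_contDiff isBounded_box measurableSet_box
    (contDiff_energyDensity hreg hBreg hne) t

/-- energy dissipation identity for smooth solutions of the Darcy
MHD system.  If `(h,B,D,P)` is a `C¹` solution (periodic in space, i.e. on the
torus `𝕋³`) with `h > 0` of
`∂ₜh + ∇·P = 0`, `∂ₜB + ∇×((B×P + D)/h) = 0`, `D = ∇×(B/h)`,
`P = ∇·(B⊗B/h) + ∇(1/h)`, `∇·B = 0`,
then `d/dt ∫_{𝕋³} (B²+1)/(2h) + ∫_{𝕋³} (D²+P²)/h = 0`. -/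
theorem darcy_mhd_energy_dissipation (T : ℝ) (hT : 0 < T)
    (h : ℝ × E3 → ℝ) (B D P : Fin 3 → ℝ × E3 → ℝ)
    (hreg : ContDiff ℝ 1 h) (hBreg : ∀ i, ContDiff ℝ 1 (B i))
    (hDreg : ∀ i, ContDiff ℝ 1 (D i)) (hPreg : ∀ i, ContDiff ℝ 1 (P i))
    (hpos : ∀ p, 0 < h p)
    (hper : ∀ t, Per fun x => h (t, x)) (hBper : ∀ i t, Per fun x => B i (t, x))
    (hDper : ∀ i t, Per fun x => D i (t, x)) (hPper : ∀ i t, Per fun x => P i (t, x))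
    (heq_h : ∀ p, pdt h p + ∑ i, pdx i (P i) p = 0)
    (heq_B : ∀ i p, pdt (B i) p
      + curlx (fun j q => (B (j+1) q * P (j+2) q - B (j+2) q * P (j+1) q + D j q) / h q) i p = 0)
    (heq_D : ∀ i p, D i p = curlx (fun j q => B j q / h q) i p)
    (heq_P : ∀ i p, P i p = (∑ j, pdx j (fun q => B i q * B j q / h q) p)
      + pdx i (fun q => (h q)⁻¹) p)
    (hdivB : ∀ p, ∑ i, pdx i (B i) p = 0)
    (t : ℝ) (ht : t ∈ Set.Icc 0 T) :
    HasDerivAt (fun s => ∫ x in Box, ((∑ i, (B i (s, x))^2) + 1) / (2 * h (s, x)))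
      (-∫ x in Box, (∑ i, ((D i (t, x))^2 + (P i (t, x))^2)) / h (t, x)) t :=
  darcy_mhd_energy_dissipation_general h B D P hreg hBreg hDreg hPreg hpos hper hBper hDper hPper
    heq_h heq_B heq_D heq_P hdivB t
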